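/- arXiv:2603.27656 — 6 statements merged into one kernel-verified Lean document; each statement's English description precedes it below -/
import Mathlib

section
/- Let A be a finite multiset of natural numbers and N a natural number. If ∑_{n ∈ A} 2^n ≥ 2^N and every element n of A satisfies n ≤ N, then there exists a sub-multiset A' of A with ∑_{n ∈ A'} 2^n = 2^N. -/
/-!
Induct on `N`. If `N + 1 ∈ A` we are done; otherwise every element is at most `N` and the sum is
at least `b * b ^ N`, so applying the induction hypothesis `b` times, each time to what is left of
`A`, yields `b` disjoint sub-multisets of sum `b ^ N`, whose union has sum `b ^ (N + 1)`.
-/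

namespace Multiset

variable {α : Type*} [DecidableEq α]

theorem exists_le_sum_map_eq_mul (f : α → ℕ) (t : ℕ) (A : Multiset α)
    (h : ∀ B ≤ A, t ≤ (B.map f).sum → ∃ B' ≤ B, (B'.map f).sum = t) (k : ℕ)
    (hk : k * t ≤ (A.map f).sum) : ∃ A' ≤ A, (A'.map f).sum = k * t := by
  induction k with
  | zero => exact ⟨0, zero_le _, by simp⟩
  | succ k ih =>
    obtain ⟨A₁, hA₁, hsum₁⟩ := ih (le_trans (by gcongr; omega) hk)
    have hsplit : ((A - A₁).map f).sum + k * t = (A.map f).sum := by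
      rw [← hsum₁, ← sum_add, ← map_add, tsub_add_cancel_of_le hA₁]
    obtain ⟨A₂, hA₂, hsum₂⟩ := h (A - A₁) tsub_le_self (by rw [add_mul] at hk; omega)
    refine ⟨A₁ + A₂, ?_, ?_⟩
    · exact (le_tsub_iff_left hA₁).mp hA₂
    · rw [map_add, sum_add, hsum₁, hsum₂, add_mul, one_mul]

theorem exists_le_sum_map_pow_eq_pow (b : ℕ) (N : ℕ) (A : Multiset ℕ)
    (hsum : b ^ N ≤ (A.map (b ^ ·)).sum) (hle : ∀ n ∈ A, n ≤ N) :
    ∃ A' ≤ A, (A'.map (b ^ ·)).sum = b ^ N := by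
  induction N generalizing A with
  | zero =>
    have hA : A ≠ 0 := by rintro rfl; simp at hsum
    obtain ⟨a, ha⟩ := exists_mem_of_ne_zero hA
    obtain rfl : a = 0 := Nat.le_zero.mp (hle a ha)
    exact ⟨{0}, singleton_le.mpr ha, by simp⟩
  | succ N ih =>
    by_cases hN : N + 1 ∈ A
    · exact ⟨{N + 1}, singleton_le.mpr hN, by simp⟩
    have hle' : ∀ n ∈ A, n ≤ N := fun n hn =>
      Nat.le_of_lt_succ ((hle n hn).lt_of_ne fun e => hN (e ▸ hn))
    have hpieces : ∀ B ≤ A, b ^ N ≤ (B.map (b ^ ·)).sum →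
        ∃ B' ≤ B, (B'.map (b ^ ·)).sum = b ^ N := fun B hB hB' =>
      ih B hB' fun n hn => hle' n (mem_of_le hB hn)
    simpa [pow_succ, mul_comm] using
      exists_le_sum_map_eq_mul _ _ A hpieces b (by rwa [mul_comm, ← pow_succ])

end Multiset

theorem stmt_0 (A : Multiset ℕ) (N : ℕ)
    (hsum : 2 ^ N ≤ (A.map (fun n => 2 ^ n)).sum)
    (hle : ∀ n ∈ A, n ≤ N) :
    ∃ A' : Multiset ℕ, A' ≤ A ∧ (A'.map (fun n => 2 ^ n)).sum = 2 ^ N :=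
  Multiset.exists_le_sum_map_pow_eq_pow 2 N A hsum hle
end

section
/- Let C be a finite uniquely decodable code over the binary alphabet {a,b}. Then ∑_{w ∈ C} 3^{-|w|} · 2^{[w]_a} ≤ 1, where |w| is the length of w and [w]_a is the number of occurrences of the letter a in w. -/
/-!
Give the letter `true` weight `2/3` and `false` weight `1/3`, and a word the product of the
weights of its letters, which is `3^{-|w|} 2^{[w]_a}`. Then McMillan's argument goes through for
this Bernoulli measure: the `N`-th power of the total weight `S` of `C` is the total weight of all
concatenations of `N` codewords, which are pairwise distinct by unique decodability. Words of a
fixed length have total weight at most `1` and these concatenations have length at most `N L`,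
so `S ^ N ≤ N L + 1` for every `N`, which forces `S ≤ 1`.
-/

/-- Unique decodability of a finite set of words. -/
def UniquelyDecodable {α : Type*} (C : Finset (List α)) : Prop :=
  ∀ l₁ l₂ : List (List α), (∀ w ∈ l₁, w ∈ C) → (∀ w ∈ l₂, w ∈ C) →
    l₁.flatten = l₂.flatten → l₁ = l₂

open Finset Filter Topology

lemma le_one_of_forall_pow_le_mul_add {x a b : ℝ} (h : ∀ n : ℕ, x ^ n ≤ n * a + b) : x ≤ 1 := by
  by_contra! hx
  have hx0 : 0 < x := one_pos.trans hx
  have hlim : Tendsto (fun n : ℕ => a * ((n : ℝ) ^ 1 / x ^ n) + b * x⁻¹ ^ n) atTop (𝓝 0) := by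
    simpa using ((tendsto_pow_const_div_const_pow_of_one_lt 1 hx).const_mul a).add
      ((tendsto_pow_atTop_nhds_zero_of_lt_one (inv_nonneg.2 hx0.le)
        (inv_lt_one_of_one_lt₀ hx)).const_mul b)
  obtain ⟨n, hn⟩ := (hlim.eventually (gt_mem_nhds one_pos)).exists
  have hquot : a * ((n : ℝ) ^ 1 / x ^ n) + b * x⁻¹ ^ n = (n * a + b) / x ^ n := by
    rw [inv_pow, pow_one]
    field_simp
  rw [hquot, div_lt_one (pow_pos hx0 n)] at hn
  exact (h n).not_gt hn

section

variable {α : Type*}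

lemma UniquelyDecodable.injOn_flatten_ofFn {C : Finset (List α)} (hud : UniquelyDecodable C)
    (N : ℕ) :
    Set.InjOn (fun f : Fin N → List α => (List.ofFn f).flatten)
      (Fintype.piFinset fun _ => C : Finset (Fin N → List α)) :=
  fun _ hf _ hg hfg => List.ofFn_injective <|
    hud _ _ (by simpa using Fintype.mem_piFinset.1 hf) (by simpa using Fintype.mem_piFinset.1 hg) hfg

def wordWeight (p : α → ℝ) (w : List α) : ℝ := (w.map p).prod

variable (p : α → ℝ)

lemma wordWeight_nonneg (hp : ∀ a, 0 ≤ p a) (w : List α) : 0 ≤ wordWeight p w :=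
  List.prod_nonneg (by simpa [wordWeight] using fun a _ => hp a)

lemma wordWeight_flatten (l : List (List α)) :
    wordWeight p l.flatten = (l.map (wordWeight p)).prod := by
  simp only [wordWeight, List.map_flatten, List.prod_flatten, List.map_map, Function.comp_def]
  rfl

lemma wordWeight_ofFn {n : ℕ} (f : Fin n → α) : wordWeight p (List.ofFn f) = ∏ i, p (f i) := by
  simp [wordWeight, List.map_ofFn, List.prod_ofFn]

variable [Fintype α] {p}

lemma sum_wordWeight_le_one_of_length_eq (hp0 : ∀ a, 0 ≤ p a) (hp1 : ∑ a, p a ≤ 1)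
    (D : Finset (List α)) (n : ℕ) (hD : ∀ w ∈ D, w.length = n) :
    ∑ w ∈ D, wordWeight p w ≤ 1 := by
  classical
  have hsub : D ⊆ univ.image (List.ofFn (n := n)) := by
    intro w hw
    obtain rfl := hD w hw
    exact mem_image.2 ⟨(w[·]), mem_univ _, List.ofFn_getElem⟩
  calc ∑ w ∈ D, wordWeight p w
      ≤ ∑ w ∈ univ.image (List.ofFn (n := n)), wordWeight p w :=
        sum_le_sum_of_subset_of_nonneg hsub fun w _ _ => wordWeight_nonneg p hp0 w
    _ = (∑ a, p a) ^ n := by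
        rw [sum_image fun f _ g _ h => List.ofFn_injective h, Fintype.sum_pow]
        simp only [wordWeight_ofFn]
    _ ≤ 1 := pow_le_one₀ (sum_nonneg fun a _ => hp0 a) hp1

lemma sum_wordWeight_le_of_length_le (hp0 : ∀ a, 0 ≤ p a) (hp1 : ∑ a, p a ≤ 1)
    (D : Finset (List α)) (M : ℕ) (hD : ∀ w ∈ D, w.length ≤ M) :
    ∑ w ∈ D, wordWeight p w ≤ M + 1 := by
  rw [← sum_fiberwise_of_maps_to (g := List.length) (t := range (M + 1))
    fun w hw => mem_range.2 (Nat.lt_succ_of_le (hD w hw))]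
  calc ∑ k ∈ range (M + 1), ∑ w ∈ D with w.length = k, wordWeight p w
      ≤ ∑ _k ∈ range (M + 1), (1 : ℝ) :=
        sum_le_sum fun k _ => sum_wordWeight_le_one_of_length_eq hp0 hp1 _ k
          fun _ hw => (mem_filter.1 hw).2
    _ = M + 1 := by simp

lemma UniquelyDecodable.sum_wordWeight_pow_le (hp0 : ∀ a, 0 ≤ p a) (hp1 : ∑ a, p a ≤ 1)
    {C : Finset (List α)} (hud : UniquelyDecodable C) (L : ℕ) (hL : ∀ w ∈ C, w.length ≤ L)
    (N : ℕ) : (∑ w ∈ C, wordWeight p w) ^ N ≤ N * L + 1 := by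
  classical
  set tuples := Fintype.piFinset fun _ : Fin N => C
  have hlen : ∀ f ∈ tuples, (List.ofFn f).flatten.length ≤ N * L := by
    intro f hf
    simp only [List.length_flatten, List.map_ofFn, List.sum_ofFn]
    simpa using sum_le_card_nsmul univ _ L fun i _ => hL _ (Fintype.mem_piFinset.1 hf i)
  calc (∑ w ∈ C, wordWeight p w) ^ N
      = ∑ f ∈ tuples, wordWeight p (List.ofFn f).flatten := by
        simp only [tuples, sum_pow', wordWeight_flatten, List.map_ofFn, List.prod_ofFn]
        rfl
    _ = ∑ w ∈ tuples.image (fun f => (List.ofFn f).flatten), wordWeight p w :=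
        (sum_image (hud.injOn_flatten_ofFn N)).symm
    _ ≤ ((N * L : ℕ) : ℝ) + 1 :=
        sum_wordWeight_le_of_length_le hp0 hp1 _ _ (by simpa using hlen)
    _ = N * L + 1 := by push_cast; rfl

theorem UniquelyDecodable.sum_wordWeight_le_one (hp0 : ∀ a, 0 ≤ p a) (hp1 : ∑ a, p a ≤ 1)
    {C : Finset (List α)} (hud : UniquelyDecodable C) : ∑ w ∈ C, wordWeight p w ≤ 1 :=
  le_one_of_forall_pow_le_mul_add fun N =>
    hud.sum_wordWeight_pow_le hp0 hp1 _ (fun _ hw => le_sup hw) N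

end

theorem stmt_1_general (C : Finset (List Bool))
    (hud : UniquelyDecodable C) :
    ∑ w ∈ C, ((3 : ℝ) ^ w.length)⁻¹ * 2 ^ (w.count true) ≤ 1 := by
  let p : Bool → ℝ := fun b => if b then 2 / 3 else 1 / 3
  have hweight (w : List Bool) :
      ((3 : ℝ) ^ w.length)⁻¹ * 2 ^ (w.count true) = wordWeight p w := by
    induction w with
    | nil => simp [wordWeight]
    | cons b w ih =>
      rw [wordWeight, List.map_cons, List.prod_cons, ← wordWeight, ← ih]
      cases b <;> simp [p, pow_succ] <;> ring
  simp only [hweight]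
  exact hud.sum_wordWeight_le_one (by norm_num [p]) (by norm_num [p])

theorem stmt_1 (C : Finset (List Bool))
    (hne : ∀ w ∈ C, w ≠ [])
    (hud : UniquelyDecodable C) :
    ∑ w ∈ C, ((3 : ℝ) ^ w.length)⁻¹ * 2 ^ (w.count true) ≤ 1 :=
  stmt_1_general C hud
end

section
/- (Kraft inequality for prefix-free codes) Let C be a finite set of nonempty words over an alphabet of size k ≥ 2 such that no word of C is a proper prefix of another. Then ∑_{w ∈ C} k^{-|w|} ≤ 1. -/
/-!
A prefix-free code without the empty word is uniquely decodable: in two factorisations of the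
same string the first codewords are both prefixes of it, hence comparable, hence equal, and one
cancels them and recurses. The inequality is then the Kraft–McMillan inequality.
-/

namespace InformationTheory

variable {α : Type*}

def PrefixFree (S : Set (List α)) : Prop :=
  S.Pairwise fun u v => ¬ u <+: v

theorem PrefixFree.eq_of_prefix_append_eq {S : Set (List α)} (hS : PrefixFree S)
    {u v : List α} (hu : u ∈ S) (hv : v ∈ S) {s t : List α} (h : u ++ s = v ++ t) : u = v := by
  by_contra huv
  have hv' : v <+: u ++ s := h ▸ List.prefix_append v t
  rcases List.prefix_or_prefix_of_prefix (List.prefix_append u s) hv' with huv' | hvu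
  · exact hS hu hv huv huv'
  · exact hS hv hu (Ne.symm huv) hvu

theorem PrefixFree.uniquelyDecodable {S : Set (List α)} (hS : PrefixFree S) (hnil : [] ∉ S) :
    UniquelyDecodable S := by
  intro L₁
  induction L₁ with
  | nil =>
    rintro (_ | ⟨v, L₂⟩) - hL₂ h
    · rfl
    · obtain ⟨rfl, -⟩ : v = [] ∧ _ := by simpa using h.symm
      exact (hnil (hL₂ [] List.mem_cons_self)).elim
  | cons u L₁ ih =>
    rintro (_ | ⟨v, L₂⟩) hL₁ hL₂ h
    · obtain ⟨rfl, -⟩ : u = [] ∧ _ := by simpa using h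
      exact (hnil (hL₁ [] List.mem_cons_self)).elim
    · simp only [List.flatten_cons] at h
      obtain rfl := hS.eq_of_prefix_append_eq (hL₁ u List.mem_cons_self)
        (hL₂ v List.mem_cons_self) h
      rw [ih L₂ (fun w hw => hL₁ w (List.mem_cons_of_mem u hw))
        (fun w hw => hL₂ w (List.mem_cons_of_mem u hw)) (List.append_cancel_left h)]

end InformationTheory

theorem stmt_3_general {α : Type*} [Fintype α]
    (k : ℕ) (hk : Fintype.card α = k) (hk2 : 2 ≤ k)
    (C : Finset (List α))
    (hne : ∀ w ∈ C, w ≠ [])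
    (hpf : ∀ u ∈ C, ∀ v ∈ C, u ≠ v → ¬ u <+: v) :
    ∑ w ∈ C, ((k : ℝ) ^ w.length)⁻¹ ≤ 1 := by
  have : Nonempty α := Fintype.card_pos_iff.mp (by omega)
  have hC : InformationTheory.UniquelyDecodable (C : Set (List α)) :=
    InformationTheory.PrefixFree.uniquelyDecodable (fun u hu v hv => hpf u hu v hv)
      fun h => hne [] h rfl
  simpa [hk, inv_pow] using InformationTheory.kraft_mcmillan_inequality hC

theorem stmt_3 {α : Type*} [Fintype α] [DecidableEq α]
    (k : ℕ) (hk : Fintype.card α = k) (hk2 : 2 ≤ k)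
    (C : Finset (List α))
    (hne : ∀ w ∈ C, w ≠ [])
    (hpf : ∀ u ∈ C, ∀ v ∈ C, u ≠ v → ¬ u <+: v) :
    ∑ w ∈ C, ((k : ℝ) ^ w.length)⁻¹ ≤ 1 :=
  stmt_3_general k hk hk2 C hne hpf
end

section
/- (Kraft converse) Let A be a finite multiset of positive integers and k ≥ 2 with ∑_{a ∈ A} k^{-a} ≤ 1. Then there exists a prefix-free set C of words over an alphabet of size k such that the multiset of lengths {|c| : c ∈ C} equals A. -/
/-!
Greedy construction: treat the lengths in decreasing order, giving each new length `n` a word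
of length `n` that extends no codeword chosen so far. Such a word exists by counting: a codeword
`c` is a prefix of `k ^ (n - |c|)` of the `k ^ n` words of length `n`, and the Kraft sum of the
earlier codewords is `< 1`. As the earlier codewords are not longer, the new word is not a prefix
of any of them either.
-/

open Finset

variable {α : Type*}

def IsPrefixFree (C : Finset (List α)) : Prop :=
  ∀ u ∈ C, ∀ v ∈ C, u ≠ v → ¬ u <+: v

variable [DecidableEq α]

theorem IsPrefixFree.insert {C : Finset (List α)} {w : List α}
    (hC : IsPrefixFree C) (hw : ∀ c ∈ C, ¬ c <+: w) (hlen : ∀ c ∈ C, c.length ≤ w.length) :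
    IsPrefixFree (insert w C) := by
  intro u hu v hv huv
  rw [Finset.mem_insert] at hu hv
  rcases hu with rfl | hu <;> rcases hv with rfl | hv
  · exact absurd rfl huv
  · intro hwv
    have hwv' : u = v := hwv.eq_of_length (le_antisymm hwv.length_le (hlen v hv))
    exact hw v hv (hwv' ▸ List.prefix_refl u)
  · exact hw u hu
  · exact hC u hu v hv huv

variable [Fintype α]

theorem card_filter_prefix_mul_le (c : List α) (n : ℕ) :
    #{v : List.Vector α n | c <+: v.toList} * Fintype.card α ^ c.length ≤ Fintype.card α ^ n := by
  by_cases hcn : c.length ≤ n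
  · have hcard : #{v : List.Vector α n | c <+: v.toList} ≤ Fintype.card α ^ (n - c.length) := by
      rw [← card_vector, ← Finset.card_univ]
      refine Finset.card_le_card_of_injOn
        (fun v => ⟨v.toList.drop c.length, by simp⟩) (fun _ _ => Finset.mem_univ _) ?_
      intro v hv w hw hvw
      simp only [Finset.coe_filter, Finset.mem_univ, true_and] at hv hw
      apply List.Vector.toList_injective
      rw [← List.take_append_drop c.length v.toList, ← List.take_append_drop c.length w.toList,
        ← List.prefix_iff_eq_take.1 hv, ← List.prefix_iff_eq_take.1 hw]
      exact congrArg (c ++ ·) (congrArg Subtype.val hvw)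
    calc _ ≤ Fintype.card α ^ (n - c.length) * Fintype.card α ^ c.length := by gcongr
      _ = Fintype.card α ^ n := by rw [← pow_add, Nat.sub_add_cancel hcn]
  · have hempty : ({v : List.Vector α n | c <+: v.toList} : Finset _) = ∅ :=
      Finset.filter_false_of_mem fun (v : List.Vector α n) _ hv =>
        hcn (v.toList_length ▸ hv.length_le)
    simp [hempty]

theorem exists_length_eq_forall_not_prefix [Nonempty α] (C : Finset (List α)) (n : ℕ)
    (hC : ∑ c ∈ C, ((Fintype.card α : ℝ) ^ c.length)⁻¹ < 1) :
    ∃ w : List α, w.length = n ∧ ∀ c ∈ C, ¬ c <+: w := by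
  by_contra! hall
  have hk : (0 : ℝ) < Fintype.card α ^ n := by positivity
  have hcover : (univ : Finset (List.Vector α n)) ⊆
      C.biUnion fun c => {v : List.Vector α n | c <+: v.toList} := by
    intro v _
    obtain ⟨c, hc, hcv⟩ := hall v.toList v.toList_length
    exact Finset.mem_biUnion.2 ⟨c, hc, by simpa using hcv⟩
  have hbound : ((Fintype.card α ^ n : ℕ) : ℝ) ≤
      ∑ c ∈ C, (Fintype.card α : ℝ) ^ n * ((Fintype.card α : ℝ) ^ c.length)⁻¹ := by
    rw [← card_vector, ← Finset.card_univ]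
    refine (Nat.cast_le.2 ((Finset.card_le_card hcover).trans Finset.card_biUnion_le)).trans ?_
    push_cast
    refine Finset.sum_le_sum fun c _ => ?_
    rw [le_mul_inv_iff₀ (by positivity)]
    exact_mod_cast card_filter_prefix_mul_le c n
  rw [← Finset.mul_sum] at hbound
  push_cast at hbound
  exact (mul_lt_of_lt_one_right hk hC).not_ge hbound

theorem exists_isPrefixFree_map_length_eq_of_sorted [Nonempty α] :
    ∀ l : List ℕ, l.Pairwise (· ≥ ·) →
      (l.map fun n => ((Fintype.card α : ℝ) ^ n)⁻¹).sum ≤ 1 →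
      ∃ C : Finset (List α), IsPrefixFree C ∧ C.val.map List.length = l
  | [], _, _ => ⟨∅, by simp [IsPrefixFree], rfl⟩
  | a :: l, hl, hsum => by
    obtain ⟨hal, hl⟩ := List.pairwise_cons.1 hl
    rw [List.map_cons, List.sum_cons] at hsum
    have hpos : (0 : ℝ) < ((Fintype.card α : ℝ) ^ a)⁻¹ := by positivity
    obtain ⟨C, hC, hCl⟩ := exists_isPrefixFree_map_length_eq_of_sorted l hl (by linarith)
    have hCsum : ∑ c ∈ C, ((Fintype.card α : ℝ) ^ c.length)⁻¹ =
        (l.map fun n => ((Fintype.card α : ℝ) ^ n)⁻¹).sum := by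
      rw [← Finset.sum_map_val, ← Multiset.sum_coe, ← Multiset.map_coe, ← hCl, Multiset.map_map]
      rfl
    obtain ⟨w, rfl, hw⟩ := exists_length_eq_forall_not_prefix C a (by linarith)
    have hlen : ∀ c ∈ C, c.length ≤ w.length := fun c hc =>
      hal _ (Multiset.mem_coe.1 (hCl ▸ Multiset.mem_map_of_mem _ hc))
    have hwC : w ∉ C := fun h => hw w h (List.prefix_refl w)
    refine ⟨insert w C, hC.insert hw hlen, ?_⟩
    rw [Finset.insert_val_of_notMem hwC, Multiset.map_cons, hCl]
    rfl

theorem exists_isPrefixFree_map_length_eq [Nonempty α] (A : Multiset ℕ)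
    (hsum : (A.map fun n => ((Fintype.card α : ℝ) ^ n)⁻¹).sum ≤ 1) :
    ∃ C : Finset (List α), IsPrefixFree C ∧ C.val.map List.length = A := by
  rw [← Multiset.sort_eq A (· ≥ ·)] at hsum ⊢
  exact exists_isPrefixFree_map_length_eq_of_sorted _ (Multiset.pairwise_sort A _) hsum

theorem stmt_5_general (A : Multiset ℕ) (k : ℕ) (hk : 2 ≤ k)
    (hsum : (A.map (fun n => ((k : ℝ) ^ n)⁻¹)).sum ≤ 1) :
    ∃ C : Finset (List (Fin k)),
      (∀ u ∈ C, ∀ v ∈ C, u ≠ v → ¬ u <+: v) ∧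
      C.val.map List.length = A := by
  have : Nonempty (Fin k) := ⟨⟨0, by omega⟩⟩
  exact exists_isPrefixFree_map_length_eq A (by simpa using hsum)

theorem stmt_5 (A : Multiset ℕ) (k : ℕ) (hk : 2 ≤ k)
    (hpos : ∀ n ∈ A, 0 < n)
    (hsum : (A.map (fun n => ((k : ℝ) ^ n)⁻¹)).sum ≤ 1) :
    ∃ C : Finset (List (Fin k)),
      (∀ u ∈ C, ∀ v ∈ C, u ≠ v → ¬ u <+: v) ∧
      C.val.map List.length = A :=
  stmt_5_general A k hk hsum
end

section
/- Let T₀ be a prefix-free finite set of words over {a,b} with all words of length at most M, satisfying ∑_{c ∈ T₀} 3^{-|c|} · 2^{[c]_a} ≤ 1 − 3^{-M} · 2^s for some s ≤ M. Then the set of words in {a,b}^M having no prefix in T₀, call it S, satisfies ∑_{w ∈ S} 2^{[w]_a} ≥ 2^s. -/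
open Finset

def Wf (n : ℕ) : Finset (List Bool) :=
  (Finset.univ : Finset (Fin n → Bool)).image (fun f => List.ofFn f)

lemma mem_Wf {n : ℕ} {w : List Bool} : w ∈ Wf n ↔ w.length = n := by
  simp only [Wf, Finset.mem_image, Finset.mem_univ, true_and]
  constructor
  · rintro ⟨f, rfl⟩; simp
  · rintro rfl; exact ⟨w.get, List.ofFn_get w⟩

lemma sumWf (n : ℕ) : ∑ w ∈ Wf n, (2:ℕ) ^ (w.count true) = 3 ^ n := by
  induction n with
  | zero => simp [Wf]
  | succ n ih =>
    have hbij : ∑ w ∈ Wf (n+1), (2:ℕ) ^ (w.count true)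
        = ∑ p ∈ (Finset.univ : Finset Bool) ×ˢ Wf n, (2:ℕ) ^ ((p.1 :: p.2).count true) := by
      apply Finset.sum_nbij' (i := fun w => (w.headI, w.tail))
        (j := fun p => p.1 :: p.2)
      · intro w hw
        rw [mem_Wf] at hw
        cases w with
        | nil => simp at hw
        | cons b t =>
          simp only [Finset.mem_product, Finset.mem_univ, true_and, mem_Wf]
          simpa using hw
      · intro p hp
        rw [mem_Wf]
        simp only [Finset.mem_product, mem_Wf] at hp
        simp [hp.2]
      · intro w hw
        rw [mem_Wf] at hw
        cases w with
        | nil => simp at hw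
        | cons b t => rfl
      · intro p hp; rfl
      · intro w hw
        rw [mem_Wf] at hw
        cases w with
        | nil => simp at hw
        | cons b t => rfl
    rw [hbij, Finset.sum_product]
    have : ∀ b : Bool, ∀ t : List Bool, ((b :: t).count true) = (if b then 1 else 0) + t.count true := by
      intro b t; cases b <;> simp [List.count_cons, Nat.add_comm]
    simp only [this]
    rw [Fintype.sum_bool]
    simp only [pow_add, ← Finset.mul_sum, ih]
    norm_num; ring

lemma sum_prefix {n : ℕ} {c : List Bool} (hc : c.length ≤ n) :
    ∑ w ∈ (Wf n).filter (fun w => c <+: w), (2:ℕ) ^ (w.count true)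
      = 3 ^ (n - c.length) * 2 ^ (c.count true) := by
  have key : ∑ w ∈ (Wf n).filter (fun w => c <+: w), (2:ℕ) ^ (w.count true)
      = ∑ t ∈ Wf (n - c.length), 2 ^ (c.count true) * 2 ^ (t.count true) := by
    apply Finset.sum_nbij' (i := fun w => w.drop c.length) (j := fun t => c ++ t)
    · intro w hw
      simp only [Finset.mem_filter, mem_Wf] at hw
      rw [mem_Wf, List.length_drop, hw.1]
    · intro t ht
      rw [mem_Wf] at ht
      simp only [Finset.mem_filter, mem_Wf, List.length_append, ht]
      exact ⟨by omega, List.prefix_append c t⟩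
    · intro w hw
      simp only [Finset.mem_filter, mem_Wf] at hw
      obtain ⟨t, rfl⟩ := hw.2
      simp
    · intro t ht; simp
    · intro w hw
      simp only [Finset.mem_filter, mem_Wf] at hw
      obtain ⟨t, rfl⟩ := hw.2
      simp [List.count_append, pow_add]
  rw [key, ← Finset.mul_sum, sumWf]; ring

theorem stmt_14 (T₀ : Finset (List Bool)) (M s : ℕ)
    (hpf : ∀ u ∈ T₀, ∀ v ∈ T₀, u ≠ v → ¬ u <+: v)
    (hlen : ∀ c ∈ T₀, c.length ≤ M)
    (hsM : s ≤ M)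
    (hsum : ∑ c ∈ T₀, ((3 : ℝ) ^ c.length)⁻¹ * 2 ^ (c.count true)
              ≤ 1 - ((3 : ℝ) ^ M)⁻¹ * 2 ^ s) :
    2 ^ s ≤
      ∑ w ∈ ((Finset.univ : Finset (Fin M → Bool)).image (fun f => List.ofFn f)).filter
          (fun w => ∀ c ∈ T₀, ¬ c <+: w),
        2 ^ (w.count true) := by
  show (2:ℕ) ^ s ≤ ∑ w ∈ (Wf M).filter (fun w => ∀ c ∈ T₀, ¬ c <+: w), 2 ^ (w.count true)
  set A := ∑ w ∈ (Wf M).filter (fun w => ∀ c ∈ T₀, ¬ c <+: w), (2:ℕ) ^ (w.count true) with hA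
  set B := ∑ c ∈ T₀, (3:ℕ) ^ (M - c.length) * 2 ^ (c.count true) with hB
  have hcompl : (Wf M).filter (fun w => ¬ ∀ c ∈ T₀, ¬ c <+: w)
      = T₀.biUnion (fun c => (Wf M).filter (fun w => c <+: w)) := by
    ext w
    simp only [Finset.mem_filter, Finset.mem_biUnion, not_forall, not_not]
    tauto
  have hdisj : (↑T₀ : Set (List Bool)).PairwiseDisjoint
      (fun c => (Wf M).filter (fun w => c <+: w)) := by
    intro c hc c' hc' hne
    rw [Function.onFun, Finset.disjoint_left]
    intro w hw hw'
    simp only [Finset.mem_filter] at hw hw'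
    rcases List.prefix_or_prefix_of_prefix hw.2 hw'.2 with h | h
    · exact hpf c hc c' hc' hne h
    · exact hpf c' hc' c hc (Ne.symm hne) h
  have hsplit : A + B = 3 ^ M := by
    rw [hA, hB]
    rw [← sumWf M, ← Finset.sum_filter_add_sum_filter_not (Wf M) (fun w => ∀ c ∈ T₀, ¬ c <+: w)]
    congr 1
    rw [hcompl, Finset.sum_biUnion hdisj]
    exact Finset.sum_congr rfl fun c hc => (sum_prefix (hlen c hc)).symm
  have hBle : (B:ℝ) ≤ 3 ^ M - 2 ^ s := by
    have h1 : (B:ℝ) = ∑ c ∈ T₀, (3:ℝ)^M * (((3:ℝ) ^ c.length)⁻¹ * 2 ^ (c.count true)) := by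
      rw [hB]; push_cast
      refine Finset.sum_congr rfl fun c hc => ?_
      rw [pow_sub₀ (3:ℝ) (by norm_num) (hlen c hc)]
      ring
    rw [h1, ← Finset.mul_sum]
    have h2 : (3:ℝ)^M * ∑ c ∈ T₀, ((3 : ℝ) ^ c.length)⁻¹ * 2 ^ (c.count true)
        ≤ (3:ℝ)^M * (1 - ((3 : ℝ) ^ M)⁻¹ * 2 ^ s) :=
      mul_le_mul_of_nonneg_left hsum (by positivity)
    have h3 : (3:ℝ)^M * (1 - ((3 : ℝ) ^ M)⁻¹ * 2 ^ s) = 3 ^ M - 2 ^ s := by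
      have : (3:ℝ)^M ≠ 0 := by positivity
      field_simp
    linarith
  have hAB : (A:ℝ) + (B:ℝ) = 3 ^ M := by exact_mod_cast congrArg (Nat.cast : ℕ → ℝ) hsplit
  have : (2:ℝ)^s ≤ (A:ℝ) := by linarith
  exact_mod_cast this
end

section
/- If a multiset A of natural numbers satisfies ∑_{n ∈ A} 2^n ≥ 2^N, all elements of A are ≤ N, and N ∉ A, then there exist disjoint sub-multisets A₁, A₂ of A (i.e., A₁ + A₂ ≤ A) each with ∑_{n ∈ Aᵢ} 2^n = 2^{N−1}. -/
/-!
By induction on `M`: if all elements of `A` are at most `M` and `∑ 2^n ≥ 2^M`, some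
sub-multiset sums to exactly `2^M`. Either `M ∈ A`, or all elements are at most `M - 1`, and
`2^(M-1)` can be extracted twice from disjoint parts of `A`. The theorem is that second case for
`M = N`.
-/

namespace Multiset

variable {α : Type*} [DecidableEq α]

lemma sum_map_eq_add_sum_map_tsub {w : α → ℕ} {A B : Multiset α} (hB : B ≤ A) :
    (A.map w).sum = (B.map w).sum + ((A - B).map w).sum := by
  rw [← sum_add, ← map_add, add_tsub_cancel_of_le hB]

lemma exists_add_le_sum_map_eq_of_extract {w : α → ℕ} {t : ℕ} {A : Multiset α}
    (extract : ∀ A' ≤ A, t ≤ (A'.map w).sum → ∃ B ≤ A', (B.map w).sum = t)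
    (hA : t + t ≤ (A.map w).sum) :
    ∃ B C, B + C ≤ A ∧ (B.map w).sum = t ∧ (C.map w).sum = t := by
  obtain ⟨B, hBA, hB⟩ := extract A le_rfl (le_trans (Nat.le_add_right t t) hA)
  have hrest : t ≤ ((A - B).map w).sum := by
    rw [sum_map_eq_add_sum_map_tsub hBA, hB] at hA
    omega
  obtain ⟨C, hCA, hC⟩ := extract (A - B) (Multiset.sub_le_self A B) hrest
  refine ⟨B, C, ?_, hB, hC⟩
  calc B + C ≤ B + (A - B) := add_le_add_right hCA B
    _ = A := add_tsub_cancel_of_le hBA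

lemma forall_le_of_forall_le_succ_of_notMem {A : Multiset ℕ} {M : ℕ}
    (hle : ∀ n ∈ A, n ≤ M + 1) (hM : M + 1 ∉ A) : ∀ n ∈ A, n ≤ M := fun n hn =>
  Nat.lt_succ_iff.mp ((hle n hn).lt_of_ne (ne_of_mem_of_not_mem hn hM))

lemma exists_le_sum_map_two_pow_eq (M : ℕ) {A : Multiset ℕ} (hle : ∀ n ∈ A, n ≤ M)
    (hsum : 2 ^ M ≤ (A.map (fun n => 2 ^ n)).sum) :
    ∃ B ≤ A, (B.map (fun n => 2 ^ n)).sum = 2 ^ M := by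
  induction M generalizing A with
  | zero =>
    obtain ⟨n, hn⟩ := exists_mem_of_ne_zero (by rintro rfl; simp at hsum : A ≠ 0)
    obtain rfl : n = 0 := Nat.le_zero.mp (hle n hn)
    exact ⟨{0}, singleton_le.mpr hn, by simp⟩
  | succ M ih =>
    by_cases hM : M + 1 ∈ A
    · exact ⟨{M + 1}, singleton_le.mpr hM, by simp⟩
    have hle' := forall_le_of_forall_le_succ_of_notMem hle hM
    obtain ⟨B, C, hBC, hB, hC⟩ := exists_add_le_sum_map_eq_of_extract
      (fun A' hA' => ih fun n hn => hle' n (mem_of_le hA' hn)) (by rwa [← two_mul, ← pow_succ'])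
    exact ⟨B + C, hBC, by rw [map_add, sum_add, hB, hC, ← two_mul, ← pow_succ']⟩

end Multiset

open Multiset in
theorem stmt_18 (A : Multiset ℕ) (N : ℕ) (hN : 1 ≤ N)
    (hsum : 2 ^ N ≤ (A.map (fun n => 2 ^ n)).sum)
    (hle : ∀ n ∈ A, n ≤ N)
    (hN' : N ∉ A) :
    ∃ A₁ A₂ : Multiset ℕ, A₁ + A₂ ≤ A ∧
      (A₁.map (fun n => 2 ^ n)).sum = 2 ^ (N - 1) ∧
      (A₂.map (fun n => 2 ^ n)).sum = 2 ^ (N - 1) := by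
  obtain ⟨M, rfl⟩ := Nat.exists_eq_add_of_le' hN
  have hle' := forall_le_of_forall_le_succ_of_notMem hle hN'
  rw [Nat.add_sub_cancel]
  exact exists_add_le_sum_map_eq_of_extract
    (fun A' hA' => exists_le_sum_map_two_pow_eq M fun n hn => hle' n (mem_of_le hA' hn))
    (by rwa [← two_mul, ← pow_succ'])
end
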